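/- arXiv:1409.5523 — 2 statements merged into one kernel-verified Lean document; each statement's English description precedes it below -/
import Mathlib

section
/- The path components of the space 𝕏 \ (Q × {0⃗}) (with the subspace topology) are exactly the sets 𝒳_n for n ∈ ℕ: each 𝒳_n is path-connected, 𝕏 \ (Q × {0⃗}) is the disjoint union of the 𝒳_n, and for distinct n and m there is no path in 𝕏 \ (Q × {0⃗}) joining a point of 𝒳_n to a point of 𝒳_m. -/
open Set Topology

/-- The Hilbert cube `Q = ∏_{n ∈ ℕ} [0,1]`. -/
abbrev Q : Type := ℕ → unitInterval

/-- `𝕏 = {(x,y) ∈ Q × Q : y_m ≠ 0 for at most one index m}`, as a subset of `Q × Q`. -/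
def XX : Set (Q × Q) := {p | {m : ℕ | p.2 m ≠ 0}.Subsingleton}

/-- `𝒳_n = {(x,y) ∈ 𝕏 : y_n > 0}`, as a subset of `Q × Q`. -/
def XXn (n : ℕ) : Set (Q × Q) := {p | p ∈ XX ∧ 0 < p.2 n}

/-- `𝕏 \ (Q × {0⃗})`, as a subset of `Q × Q`. -/
def W : Set (Q × Q) := {p | p ∈ XX ∧ p.2 ≠ 0}

/-- linear segment path in the unit interval -/
def seg (a b : unitInterval) : Path a b where
  toFun t := ⟨(1 - t.1) * a.1 + t.1 * b.1, by
    constructor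
    · nlinarith [a.2.1, a.2.2, b.2.1, b.2.2, t.2.1, t.2.2]
    · nlinarith [a.2.1, a.2.2, b.2.1, b.2.2, t.2.1, t.2.2]⟩
  continuous_toFun := by
    apply Continuous.subtype_mk
    fun_prop
  source' := by ext; simp
  target' := by ext; simp

lemma seg_zero (t : unitInterval) : seg 0 0 t = 0 := by
  ext; simp [seg]

lemma seg_pos {a b : unitInterval} (ha : 0 < a) (hb : 0 < b) (t : unitInterval) :
    0 < seg a b t := by
  rw [← Subtype.coe_lt_coe]
  have ha' : (0:ℝ) < a := ha
  have hb' : (0:ℝ) < b := hb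
  have ht0 := t.2.1
  have ht1 := t.2.2
  show (0:ℝ) < (1 - t.1) * a.1 + t.1 * b.1
  rcases le_total (a:ℝ) (b:ℝ) with h | h
  · nlinarith [mul_nonneg ht0 (sub_nonneg.mpr h)]
  · nlinarith [mul_nonneg ht0 (sub_nonneg.mpr h), mul_nonneg (sub_nonneg.mpr ht1) (sub_nonneg.mpr h)]

lemma XXn_eq_zero {n : ℕ} {p : Q × Q} (hp : p ∈ XXn n) {m : ℕ} (hm : m ≠ n) :
    p.2 m = 0 := by
  by_contra h
  exact hm (hp.1 h hp.2.ne')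

/-- the path components of `𝕏 \ (Q × {0⃗})` are exactly the sets `𝒳_n`:
each `𝒳_n` is path-connected, `𝕏 \ (Q × {0⃗})` is their pairwise disjoint union, and no
path inside `𝕏 \ (Q × {0⃗})` joins points of distinct `𝒳_n`, `𝒳_m`. -/
theorem path_components_of_XX_minus_Q :
    (∀ n : ℕ, IsPathConnected (XXn n)) ∧
    (W = ⋃ n : ℕ, XXn n) ∧
    (Pairwise (Function.onFun Disjoint XXn)) ∧
    (∀ n m : ℕ, n ≠ m → ∀ p ∈ XXn n, ∀ q ∈ XXn m, ¬ JoinedIn W p q) := by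
  have hne : ∀ (x : unitInterval), x ≠ 0 → 0 < x := fun x hx =>
    lt_of_le_of_ne unitInterval.nonneg' (Ne.symm hx)
  refine ⟨?_, ?_, ?_, ?_⟩
  · -- each XXn is path connected
    intro n
    set y₀ : Q := fun m => if m = n then 1 else 0 with hy₀
    have hp₀ : ((fun _ => 0, y₀) : Q × Q) ∈ XXn n := by
      constructor
      · have hsub : {m | y₀ m ≠ 0} ⊆ {n} := by
          intro a ha
          simp only [mem_setOf_eq, hy₀] at ha
          by_contra h
          simp [h] at ha
          exact h ha
        exact Set.subsingleton_of_subset_singleton hsub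
      · simp only [hy₀, if_pos rfl]
        norm_num
    refine ⟨_, hp₀, ?_⟩
    intro p hp
    -- a path from basepoint to p; instead join any two points
    -- build path from (fun _ => 0, y₀) to p
    set r : Q × Q := (fun _ => 0, y₀)
    have hjoin : ∀ p ∈ XXn n, ∀ q ∈ XXn n, JoinedIn (XXn n) p q := by
      intro p hp q hq
      refine ⟨(Path.prod (Path.pi fun i => seg (p.1 i) (q.1 i))
        (Path.pi fun i => seg (p.2 i) (q.2 i))), ?_⟩
      intro t
      have hval : (Path.prod (Path.pi fun i => seg (p.1 i) (q.1 i))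
          (Path.pi fun i => seg (p.2 i) (q.2 i))) t =
          ((fun i => seg (p.1 i) (q.1 i) t), (fun i => seg (p.2 i) (q.2 i) t)) := by
        simp [Path.prod_coe, Path.pi_coe]
      rw [hval]
      constructor
      · intro a ha b hb
        simp only [XX, mem_setOf_eq] at ha hb
        by_contra hab
        rcases eq_or_ne a n with h | h
        · subst h
          have : seg (p.2 b) (q.2 b) t = 0 := by
            rw [XXn_eq_zero hp (Ne.symm hab), XXn_eq_zero hq (Ne.symm hab)]
            exact seg_zero t
          exact hb this
        · have : seg (p.2 a) (q.2 a) t = 0 := by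
            rw [XXn_eq_zero hp h, XXn_eq_zero hq h]
            exact seg_zero t
          exact ha this
      · exact seg_pos hp.2 hq.2 t
    exact hjoin _ hp₀ p hp
  · -- W is the union
    ext p
    simp only [W, mem_setOf_eq, mem_iUnion]
    constructor
    · rintro ⟨hXX, hy⟩
      have : ∃ m, p.2 m ≠ 0 := by
        by_contra h
        push_neg at h
        exact hy (funext h)
      obtain ⟨m, hm⟩ := this
      exact ⟨m, hXX, hne _ hm⟩
    · rintro ⟨m, hXX, hm⟩
      refine ⟨hXX, fun h => ?_⟩
      rw [h] at hm
      exact lt_irrefl _ hm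
  · -- pairwise disjoint
    intro n m hnm
    rw [Function.onFun, Set.disjoint_left]
    intro p hpn hpm
    exact hnm (hpn.1 hpn.2.ne' hpm.2.ne')
  · -- no joining paths
    intro n m hnm p hp q hq hJ
    obtain ⟨γ, hγ⟩ := hJ
    set A : Set unitInterval := {t | (0:ℝ) < ((γ t).2 n : ℝ)} with hA
    set B : Set unitInterval := ⋃ k ∈ {k : ℕ | k ≠ n}, {t | (0:ℝ) < ((γ t).2 k : ℝ)} with hB
    have hcont : ∀ k : ℕ, Continuous fun t => ((γ t).2 k : ℝ) := fun k =>
      continuous_subtype_val.comp (((continuous_apply k).comp continuous_snd).comp γ.continuous)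
    have hAopen : IsOpen A := isOpen_lt continuous_const (hcont n)
    have hBopen : IsOpen B := isOpen_biUnion fun k _ => isOpen_lt continuous_const (hcont k)
    have hcover : (univ : Set unitInterval) ⊆ A ∪ B := by
      intro t _
      obtain ⟨hXX, hy⟩ := hγ t
      have : ∃ k, (γ t).2 k ≠ 0 := by
        by_contra h
        push_neg at h
        exact hy (funext h)
      obtain ⟨k, hk⟩ := this
      have hk' : (0:ℝ) < ((γ t).2 k : ℝ) := hne _ hk
      rcases eq_or_ne k n with rfl | h
      · exact Or.inl hk'
      · exact Or.inr (mem_biUnion h hk')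
    have hAne : (univ ∩ A).Nonempty := by
      refine ⟨0, mem_univ _, ?_⟩
      show (0:ℝ) < ((γ 0).2 n : ℝ)
      rw [γ.source]
      exact hp.2
    have hBne : (univ ∩ B).Nonempty := by
      refine ⟨1, mem_univ _, ?_⟩
      refine mem_biUnion (Ne.symm hnm) ?_
      show (0:ℝ) < ((γ 1).2 m : ℝ)
      rw [γ.target]
      exact hq.2
    obtain ⟨t, _, htA, htB⟩ := isPreconnected_univ A B hAopen hBopen hcover hAne hBne
    obtain ⟨k, hk, htk⟩ := mem_iUnion₂.mp htB
    have hXX := (hγ t).1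
    have htA' : (0:ℝ) < ((γ t).2 n : ℝ) := htA
    have htk' : (0:ℝ) < ((γ t).2 k : ℝ) := htk
    have hn : (γ t).2 n ≠ 0 := by
      intro h
      rw [h] at htA'
      norm_num at htA'
    have hkne : (γ t).2 k ≠ 0 := by
      intro h
      rw [h] at htk'
      norm_num at htk'
    exact hk (hXX hkne hn)
end

section
/- Let X and Y be perfect compact metric spaces (no isolated points), A ⊆ B ⊆ X and C ⊆ D ⊆ Y closed subsets with A, C nonempty. Form X₁ = I_d(X,A) with isolated points ã_n (d an admissible sequence in A), note B' = (B × {0}) ∪ {ã_n : n ≥ 1} is a closed subset of X₁ containing all isolated points of X₁, and form I₂(X,B,A) = I_{d'}(X₁, B') for an admissible sequence d' in B'; form I₂(Y,D,C) analogously from admissible sequences e, e'. Then there exists a homeomorphism f : X → Y with f(A) = C and f(B) = D if and only if I₂(X,B,A) and I₂(Y,D,C) are homeomorphic. -/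
open Set Topology

/-- The space `I_d(Z,W) ⊆ Z × [0,1]`: the copy `Z × {0}` of `Z` together with the isolated
points `ã_n = (d_n, 1/n)` (here indexed by `n : ℕ`, with `ã_n = (d n, 1/(n+1))`). -/
def Itilde {Z : Type*} [TopologicalSpace Z] (d : ℕ → Z) : Set (Z × ℝ) :=
  (Set.univ ×ˢ {(0 : ℝ)}) ∪ Set.range (fun n : ℕ => (d n, 1 / (n + 1 : ℝ)))

/-- A sequence `d` is admissible for `W` if it takes values in `W`, has dense range in `W`,
and attains each of its values at infinitely many indices. -/
def Admissible {Z : Type*} [TopologicalSpace Z] (W : Set Z) (d : ℕ → Z) : Prop :=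
  (∀ n, d n ∈ W) ∧ W ⊆ closure (Set.range d) ∧ ∀ n, {m : ℕ | d m = d n}.Infinite

/-- The subset `B' = (B × {0}) ∪ {ã_n : n}` of `I_d(X,A)`. -/
def liftSet {Z : Type*} [TopologicalSpace Z] (d : ℕ → Z) (B : Set Z) : Set ↥(Itilde d) :=
  {p | ((p : Z × ℝ).1 ∈ B ∧ (p : Z × ℝ).2 = 0) ∨
    ∃ n : ℕ, (p : Z × ℝ) = (d n, 1 / (n + 1 : ℝ))}

/-!
The isolated points of `I_c(Z, W)` are exactly the points `ã_n`: a base point `(z, 0)` is a limit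
of other base points, or, when `z` is isolated in `Z`, of the points `ã_m` with `c m = z`. Hence a
homeomorphism `I_c(Z, W) ≃ₜ I_{c'}(Z', W')` preserves the copies of `Z` and the closures of the sets
of isolated points, whose traces on the copies of `Z` are `W` and `W'`; it therefore restricts to a
homeomorphism of pairs `(Z, W) ≃ₜ (Z', W')`. Conversely, a homeomorphism of pairs `f` extends by
`ã_n ↦ ã'_{σ n}` for a bijection `σ` of `ℕ` with `dist (f (c n)) (c' (σ n)) → 0`. Such a `σ` comes
from the Schröder–Bernstein theorem applied to two injective choices of nearby indices, which exist
because every value of `c` and of `c'` is attained infinitely often. Both directions are applied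
twice: first to `(X, A)`, then to `(I_d(X, A), B')`.
-/

open Filter Function

theorem Admissible.closure_range_eq {Z : Type*} [TopologicalSpace Z] {W : Set Z} {c : ℕ → Z}
    (hc : Admissible W c) (hW : IsClosed W) : closure (range c) = W :=
  (closure_minimal (range_subset_iff.2 hc.1) hW).antisymm hc.2.1

theorem finite_setOf_le_one_div {t : ℝ} (ht : 0 < t) : {n : ℕ | t ≤ 1 / (n + 1 : ℝ)}.Finite := by
  have := (tendsto_order.1 (tendsto_one_div_add_atTop_nhds_zero_nat (𝕜 := ℝ))).2 t ht
  rw [← Nat.cofinite_eq_atTop, eventually_cofinite] at this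
  simpa only [not_lt] using this

theorem exists_injective_dist_lt {M : Type*} [PseudoMetricSpace M] {u v : ℕ → M}
    (huv : range u ⊆ closure (range v)) (hv : ∀ n, {k | v k = v n}.Infinite) :
    ∃ φ : ℕ → ℕ, Injective φ ∧ ∀ n, dist (u n) (v (φ n)) < 1 / (n + 1 : ℝ) := by
  have : ∀ n, ∃ᶠ k in atTop, dist (u n) (v k) < 1 / (n + 1 : ℝ) := fun n => by
    obtain ⟨_, ⟨m, rfl⟩, hm⟩ :=
      Metric.mem_closure_iff.1 (huv (mem_range_self n)) _ Nat.one_div_pos_of_nat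
    exact (Nat.frequently_atTop_iff_infinite.2 (hv m)).mono fun k hk => by rwa [hk]
  obtain ⟨φ, hφ, hφd⟩ := extraction_forall_of_frequently this
  exact ⟨φ, hφ.injective, hφd⟩

theorem exists_equiv_tendsto_dist {M : Type*} [PseudoMetricSpace M] {a b : ℕ → M}
    (hab : range a ⊆ closure (range b)) (hba : range b ⊆ closure (range a))
    (ha : ∀ n, {k | a k = a n}.Infinite) (hb : ∀ n, {k | b k = b n}.Infinite) :
    ∃ σ : ℕ ≃ ℕ, Tendsto (fun n => dist (a n) (b (σ n))) atTop (𝓝 0) := by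
  obtain ⟨φ, hφ, hφd⟩ := exists_injective_dist_lt hab hb
  obtain ⟨ψ, hψ, hψd⟩ := exists_injective_dist_lt hba ha
  obtain ⟨τ, hτ, hτd⟩ := Embedding.schroeder_bernstein_of_rel hφ hψ
    (fun n m => dist (a n) (b m) < 1 / (n + 1 : ℝ) ∨ dist (a n) (b m) < 1 / (m + 1 : ℝ))
    (fun n => Or.inl (hφd n)) (fun m => Or.inr (by rw [dist_comm]; exact hψd m))
  have hbound : ∀ n, dist (a n) (b (τ n)) ≤ 1 / (n + 1 : ℝ) + 1 / (τ n + 1 : ℝ) := fun n => by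
    have h₁ : (0 : ℝ) < 1 / (n + 1 : ℝ) := Nat.one_div_pos_of_nat
    have h₂ : (0 : ℝ) < 1 / (τ n + 1 : ℝ) := Nat.one_div_pos_of_nat
    rcases hτd n with h | h <;> linarith
  have hlim := tendsto_one_div_add_atTop_nhds_zero_nat (𝕜 := ℝ)
  refine ⟨Equiv.ofBijective τ hτ, squeeze_zero (fun n => dist_nonneg) hbound ?_⟩
  simpa using hlim.add (hlim.comp hτ.injective.nat_tendsto_atTop)

noncomputable section

namespace Itilde

variable {Z Z' : Type*} {c : ℕ → Z} {c' : ℕ → Z'} {f : Z → Z'} {σ : ℕ → ℕ}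

section Topological

variable [TopologicalSpace Z] [TopologicalSpace Z']

def base (c : ℕ → Z) (z : Z) : Itilde c := ⟨(z, 0), Or.inl ⟨mem_univ z, rfl⟩⟩

def pt (c : ℕ → Z) (n : ℕ) : Itilde c := ⟨(c n, 1 / (n + 1 : ℝ)), Or.inr ⟨n, rfl⟩⟩

@[elab_as_elim]
theorem induction {P : Itilde c → Prop} (base : ∀ z, P (base c z)) (pt : ∀ n, P (pt c n))
    (q : Itilde c) : P q := by
  obtain ⟨⟨z, t⟩, ⟨-, ht : t = 0⟩ | ⟨n, hn⟩⟩ := q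
  · subst ht; exact base z
  · cases hn; exact pt n

theorem base_injective : Injective (base c) :=
  fun _ _ h => congrArg (fun q : Itilde c => (q : Z × ℝ).1) h

theorem pt_injective : Injective (pt c) := fun n m h => by
  simpa [pt] using congrArg (fun q : Itilde c => (q : Z × ℝ).2) h

@[simp]
theorem base_ne_pt (z : Z) (n : ℕ) : base c z ≠ pt c n := fun h =>
  Nat.one_div_pos_of_nat.ne (congrArg (fun q : Itilde c => (q : Z × ℝ).2) h)

@[simp]
theorem pt_ne_base (n : ℕ) (z : Z) : pt c n ≠ base c z := (base_ne_pt z n).symm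

theorem compl_range_pt : (range (pt c))ᶜ = range (base c) := by
  ext q
  induction q using Itilde.induction <;> simp

theorem isClosedEmbedding_base : IsClosedEmbedding (base c) := by
  refine ⟨(isEmbedding_prodMkLeft (0 : ℝ)).codRestrict (Itilde c) fun z => (base c z).2, ?_⟩
  have : range (base c) = {q : Itilde c | (q : Z × ℝ).2 = 0} := by
    ext q
    induction q using Itilde.induction with
    | base z => exact iff_of_true (mem_range_self z) rfl
    | pt n => exact iff_of_false (by simp) Nat.one_div_pos_of_nat.ne'
  rw [this]
  exact isClosed_eq (continuous_snd.comp continuous_subtype_val) continuous_const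

theorem continuous_base : Continuous (base c) := isClosedEmbedding_base.continuous

theorem closure_range_pt (hc : ∀ n, {m | c m = c n}.Infinite) :
    closure (range (pt c)) = range (pt c) ∪ base c '' closure (range c) := by
  refine subset_antisymm (fun q hq => ?_) (union_subset subset_closure ?_)
  · induction q using Itilde.induction with
    | base z =>
      refine Or.inr ⟨z, ?_, rfl⟩
      exact map_mem_closure (continuous_fst.comp continuous_subtype_val) hq
        (by rintro _ ⟨n, rfl⟩; exact mem_range_self n)
    | pt n => exact Or.inl (mem_range_self n)
  · have hrange : range (base c ∘ c) ⊆ closure (range (pt c)) := by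
      rintro _ ⟨n, rfl⟩
      obtain ⟨φ, hφ, hcφ⟩ :=
        extraction_of_frequently_atTop (Nat.frequently_atTop_iff_infinite.2 (hc n))
      refine mem_closure_of_tendsto (f := pt c ∘ φ) (b := atTop) ?_
        (Eventually.of_forall fun k => mem_range_self (φ k))
      rw [tendsto_subtype_rng]
      have h := (tendsto_one_div_add_atTop_nhds_zero_nat (𝕜 := ℝ)).comp hφ.tendsto_atTop
      simpa [pt, base, hcφ] using (tendsto_const_nhds (x := c n) (f := atTop)).prodMk_nhds h
    calc base c '' closure (range c) ⊆ closure (base c '' range c) :=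
          image_closure_subset_closure_image continuous_base
      _ = closure (range (base c ∘ c)) := by rw [range_comp]
      _ ⊆ closure (range (pt c)) := closure_minimal hrange isClosed_closure

theorem base_mem_closure_range_pt_iff (hc : ∀ n, {m | c m = c n}.Infinite) {z : Z} :
    base c z ∈ closure (range (pt c)) ↔ z ∈ closure (range c) := by
  simp [closure_range_pt hc, base_injective.mem_set_image]

theorem not_isOpen_singleton_base (hc : ∀ n, {m | c m = c n}.Infinite)
    (hiso : ∀ z, IsOpen {z} → z ∈ closure (range c)) (z : Z) : ¬ IsOpen {base c z} := by
  intro hopen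
  have hz : IsOpen {z} := by
    simpa [← image_singleton, base_injective.preimage_image] using
      hopen.preimage (continuous_base (c := c))
  have hmem := (base_mem_closure_range_pt_iff hc).2 (hiso z hz)
  obtain ⟨_, rfl, n, hn⟩ := mem_closure_iff.1 hmem _ hopen rfl
  exact base_ne_pt z n hn.symm

theorem liftSet_eq (B : Set Z) : liftSet c B = base c '' B ∪ range (pt c) := by
  ext q
  induction q using Itilde.induction with
  | base z =>
    simp only [mem_union, base_injective.mem_set_image, mem_range, pt_ne_base, exists_false,
      or_false]
    simp [liftSet, base, eq_comm (a := (0 : ℝ)), Nat.cast_add_one_ne_zero]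
  | pt n => simp [liftSet, pt]

theorem base_mem_liftSet_iff {B : Set Z} {z : Z} : base c z ∈ liftSet c B ↔ z ∈ B := by
  simp [liftSet_eq, base_injective.mem_set_image]

theorem isClosed_liftSet {W B : Set Z} (hc : Admissible W c) (hW : IsClosed W) (hWB : W ⊆ B)
    (hB : IsClosed B) : IsClosed (liftSet c B) := by
  refine isClosed_of_closure_subset ?_
  rw [liftSet_eq, closure_union, closure_range_pt hc.2.2, hc.closure_range_eq hW,
    (isClosedEmbedding_base.isClosedMap B hB).closure_eq]
  exact union_subset subset_union_left
    (union_subset subset_union_right (subset_union_of_subset_left (image_mono hWB) _))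

open Classical in
def map (c : ℕ → Z) (c' : ℕ → Z') (f : Z → Z') (σ : ℕ → ℕ) (q : Itilde c) : Itilde c' :=
  if h : ∃ n, pt c n = q then pt c' (σ h.choose) else base c' (f (q : Z × ℝ).1)

@[simp]
theorem map_base (z : Z) : map c c' f σ (base c z) = base c' (f z) :=
  dif_neg fun ⟨n, h⟩ => pt_ne_base n z h

@[simp]
theorem map_pt (n : ℕ) : map c c' f σ (pt c n) = pt c' (σ n) := by
  have h : ∃ m, pt c m = pt c n := ⟨n, rfl⟩
  rw [map, dif_pos h, pt_injective h.choose_spec]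

theorem leftInverse_map {g : Z' → Z} {τ : ℕ → ℕ} (hf : LeftInverse g f) (hσ : LeftInverse τ σ) :
    LeftInverse (map c' c g τ) (map c c' f σ) := fun q => by
  induction q using Itilde.induction with
  | base z => simp [hf z]
  | pt n => simp [hσ n]

def mapEquiv (c : ℕ → Z) (c' : ℕ → Z') (f : Z ≃ Z') (σ : ℕ ≃ ℕ) : Itilde c ≃ Itilde c' where
  toFun := map c c' f σ
  invFun := map c' c f.symm σ.symm
  left_inv := leftInverse_map f.left_inv σ.left_inv
  right_inv := leftInverse_map f.right_inv σ.right_inv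

variable [T1Space Z] [T1Space Z']

theorem isOpen_singleton_pt (n : ℕ) : IsOpen {pt c n} := by
  let t : ℝ := 1 / ((n + 1 : ℕ) + 1)
  have ht : 0 < t := Nat.one_div_pos_of_nat
  refine isOpen_singleton_of_finite_mem_nhds (pt c n) (s := {q | t < (q : Z × ℝ).2}) ?_ ?_
  · exact (isOpen_lt continuous_const (continuous_snd.comp continuous_subtype_val)).mem_nhds
      (show t < 1 / (n + 1 : ℝ) from Nat.one_div_lt_one_div n.lt_succ_self)
  · refine ((finite_setOf_le_one_div ht).image (pt c)).subset fun q hq => ?_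
    induction q using Itilde.induction with
    | base z => exact absurd hq (not_lt.2 ht.le)
    | pt m => exact mem_image_of_mem _ (show t ≤ 1 / (m + 1 : ℝ) from le_of_lt hq)

theorem isOpen_singleton_iff (hc : ∀ n, {m | c m = c n}.Infinite)
    (hiso : ∀ z, IsOpen {z} → z ∈ closure (range c)) (q : Itilde c) :
    IsOpen {q} ↔ q ∈ range (pt c) := by
  induction q using Itilde.induction with
  | base z => simp [not_isOpen_singleton_base hc hiso z]
  | pt n => simp [isOpen_singleton_pt n]

theorem isClosed (c : ℕ → Z) : IsClosed (Itilde c) := by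
  refine isClosed_of_closure_subset fun p hp => ?_
  rw [Itilde, closure_union, (isClosed_univ.prod isClosed_singleton).closure_eq] at hp
  rcases hp with hp | hp
  · exact Or.inl hp
  have hu : range (fun n : ℕ => (c n, 1 / (n + 1 : ℝ))) ⊆ {q : Z × ℝ | 0 ≤ q.2} :=
    range_subset_iff.2 fun n => (Nat.one_div_pos_of_nat (α := ℝ)).le
  have hnonneg : 0 ≤ p.2 := closure_minimal hu (isClosed_le continuous_const continuous_snd) hp
  rcases hnonneg.eq_or_lt with h0 | hpos
  · exact Or.inl ⟨mem_univ _, h0.symm⟩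
  -- only finitely many of the points `(c n, 1 / (n + 1))` lie at height `≥ p.2 / 2`
  let S := {n : ℕ | p.2 / 2 ≤ 1 / (n + 1 : ℝ)}
  rw [← image_univ, ← union_compl_self S, image_union, closure_union,
    ((finite_setOf_le_one_div (half_pos hpos)).image _).isClosed.closure_eq] at hp
  rcases hp with hp | hp
  · exact Or.inr (image_subset_range _ _ hp)
  · have : p.2 ≤ p.2 / 2 := closure_minimal (t := {q : Z × ℝ | q.2 ≤ p.2 / 2})
      (by
        rintro _ ⟨n, hn, rfl⟩
        simp only [S, mem_compl_iff, mem_ofPred_eq, not_le] at hn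
        exact hn.le)
      (isClosed_le continuous_snd continuous_const) hp
    linarith

instance [CompactSpace Z] : CompactSpace (Itilde c) := by
  refine isCompact_iff_compactSpace.1 ((isCompact_univ.prod (isCompact_Icc (a := 0) (b := 1)))
    |>.of_isClosed_subset (isClosed c) ?_)
  rintro _ (⟨-, h⟩ | ⟨n, rfl⟩)
  · exact ⟨mem_univ _, by simp_all⟩
  · exact ⟨mem_univ _, Nat.one_div_pos_of_nat.le,
      by simpa using Nat.one_div_le_one_div (α := ℝ) (Nat.zero_le n)⟩

theorem mem_liftSet_of_isOpen_singleton {W : Set Z} (hc : Admissible W c)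
    (hiso : ∀ z, IsOpen {z} → z ∈ W) (B : Set Z) {q : Itilde c} (hq : IsOpen {q}) :
    q ∈ liftSet c B := by
  rw [liftSet_eq]
  exact Or.inr ((isOpen_singleton_iff hc.2.2 (fun z hz => hc.2.1 (hiso z hz)) q).1 hq)

theorem exists_homeomorph_restrict {W : Set Z} {W' : Set Z'}
    (hc : Admissible W c) (hW : IsClosed W) (hiso : ∀ z, IsOpen {z} → z ∈ W)
    (hc' : Admissible W' c') (hW' : IsClosed W') (hiso' : ∀ z, IsOpen {z} → z ∈ W')
    (G : Itilde c ≃ₜ Itilde c') :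
    ∃ g : Z ≃ₜ Z', g '' W = W' ∧ ∀ z, G (base c z) = base c' (g z) := by
  have hGpt : G '' range (pt c) = range (pt c') := by
    refine (congrArg _ (ext fun q => ?_)).trans (G.image_preimage _)
    rw [mem_preimage, ← isOpen_singleton_iff hc'.2.2 (fun z hz => hc'.2.1 (hiso' z hz)),
      ← isOpen_singleton_iff hc.2.2 (fun z hz => hc.2.1 (hiso z hz)), ← image_singleton,
      G.isOpen_image]
  have hGbase : G '' range (base c) = range (base c') := by
    rw [← compl_range_pt, ← compl_range_pt, G.image_compl, hGpt]
  let e := (isClosedEmbedding_base (c := c)).toHomeomorph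
  let e' := (isClosedEmbedding_base (c := c')).toHomeomorph
  let g : Z ≃ₜ Z' := e.trans (((G.image _).trans (.setCongr hGbase)).trans e'.symm)
  have hg : ∀ z, G (base c z) = base c' (g z) := fun z => by
    change G (base c z) = (e' (e'.symm _) : Itilde c')
    rw [e'.apply_symm_apply]
    rfl
  refine ⟨g, ?_, hg⟩
  have hpre : g ⁻¹' W' = W := ext fun z => by
    rw [mem_preimage, ← hc'.closure_range_eq hW', ← base_mem_closure_range_pt_iff hc'.2.2, ← hg,
      ← hGpt, ← G.image_closure, G.injective.mem_set_image, base_mem_closure_range_pt_iff hc.2.2,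
      hc.closure_range_eq hW]
  rw [← hpre, g.image_preimage]

end Topological

section Metric

variable [MetricSpace Z] [MetricSpace Z']

theorem dist_base_base (z w : Z) : dist (base c z) (base c w) = dist z w := by
  simp [base, Subtype.dist_eq, Prod.dist_eq]

theorem dist_pt_base (n : ℕ) (z : Z) :
    dist (pt c n) (base c z) = max (dist (c n) z) (1 / (n + 1 : ℝ)) := by
  simp [pt, base, Subtype.dist_eq, Prod.dist_eq, abs_of_pos (Nat.cast_add_one_pos (α := ℝ) n)]

theorem continuous_of_tendsto_dist {T : Type*} [PseudoMetricSpace T] {F : Itilde c → T}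
    (hbase : Continuous (F ∘ base c))
    (hpt : Tendsto (fun n => dist (F (pt c n)) (F (base c (c n)))) atTop (𝓝 0)) :
    Continuous F := by
  refine continuous_iff_continuousAt.2 fun q => ?_
  induction q using Itilde.induction with
  | pt n =>
    rw [ContinuousAt, (isOpen_singleton_iff_nhds_eq_pure _).1 (isOpen_singleton_pt n)]
    exact tendsto_pure_nhds F _
  | base z =>
    refine Metric.continuousAt_iff.2 fun ε hε => ?_
    obtain ⟨δ, hδ, hFδ⟩ := Metric.continuousAt_iff.1 hbase.continuousAt (ε / 2) (half_pos hε)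
    obtain ⟨N, hN⟩ := eventually_atTop.1 ((tendsto_order.1 hpt).2 (ε / 2) (half_pos hε))
    refine ⟨min δ (1 / (N + 1 : ℝ)), lt_min hδ Nat.one_div_pos_of_nat, fun {r} hr => ?_⟩
    rw [lt_min_iff] at hr
    induction r using Itilde.induction with
    | base w =>
      rw [dist_base_base] at hr
      exact (hFδ hr.1).trans (half_lt_self hε)
    | pt n =>
      rw [dist_pt_base, max_lt_iff, max_lt_iff] at hr
      have hNn : N ≤ n := by
        by_contra! h
        exact (Nat.one_div_le_one_div h.le).not_gt hr.2.2
      calc dist (F (pt c n)) (F (base c z))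
          ≤ dist (F (pt c n)) (F (base c (c n))) + dist (F (base c (c n))) (F (base c z)) :=
            dist_triangle _ _ _
        _ < ε / 2 + ε / 2 := add_lt_add (hN n hNn) (hFδ hr.1.1)
        _ = ε := add_halves ε

theorem continuous_map (hf : Continuous f) (hσ : Tendsto σ atTop atTop)
    (hdist : Tendsto (fun n => dist (f (c n)) (c' (σ n))) atTop (𝓝 0)) :
    Continuous (map c c' f σ) := by
  refine continuous_of_tendsto_dist ((continuous_base.comp hf).congr fun z => (map_base z).symm) ?_
  simp only [map_pt, map_base, dist_pt_base, dist_comm (c' _)]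
  simpa using hdist.max ((tendsto_one_div_add_atTop_nhds_zero_nat (𝕜 := ℝ)).comp hσ)

theorem exists_homeomorph_extend [CompactSpace Z] {W : Set Z} {W' : Set Z'}
    (hc : Admissible W c) (hc' : Admissible W' c') (f : Z ≃ₜ Z') (hf : f '' W = W') :
    ∃ F : Itilde c ≃ₜ Itilde c',
      (∀ z, F (base c z) = base c' (f z)) ∧ F '' range (pt c) = range (pt c') := by
  have hfc : range (f ∘ c) ⊆ closure (range c') := by
    rintro _ ⟨n, rfl⟩
    exact hc'.2.1 (hf ▸ mem_image_of_mem f (hc.1 n))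
  have hc'f : range c' ⊆ closure (range (f ∘ c)) := by
    rintro _ ⟨m, rfl⟩
    rw [range_comp, ← f.image_closure]
    exact image_mono hc.2.1 (hf ▸ hc'.1 m)
  have hinf : ∀ n, {k | (f ∘ c) k = (f ∘ c) n}.Infinite := by
    simpa [f.injective.eq_iff] using hc.2.2
  obtain ⟨σ, hσ⟩ := exists_equiv_tendsto_dist hfc hc'f hinf hc'.2.2
  have hcont : Continuous (mapEquiv c c' f.toEquiv σ) :=
    continuous_map f.continuous σ.injective.nat_tendsto_atTop hσ
  refine ⟨hcont.homeoOfEquivCompactToT2, fun z => map_base z, ?_⟩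
  have hpt : hcont.homeoOfEquivCompactToT2 ∘ pt c = pt c' ∘ σ := funext fun n => map_pt n
  rw [← range_comp, hpt, σ.surjective.range_comp]

end Metric

end Itilde

end

theorem homeomorph_pair_iff_I2_homeomorph_general
    {X Y : Type*} [MetricSpace X] [CompactSpace X] [MetricSpace Y] [CompactSpace Y]
    (hXperf : ∀ x : X, ¬ IsOpen ({x} : Set X))
    (hYperf : ∀ y : Y, ¬ IsOpen ({y} : Set Y))
    {A B : Set X} {C D : Set Y}
    (hA : IsClosed A) (hB : IsClosed B) (hAB : A ⊆ B)
    (hC : IsClosed C) (hD : IsClosed D) (hCD : C ⊆ D)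
    {d : ℕ → X} {e : ℕ → Y} (hd : Admissible A d) (he : Admissible C e)
    {d' : ℕ → ↥(Itilde d)} {e' : ℕ → ↥(Itilde e)}
    (hd' : Admissible (liftSet d B) d') (he' : Admissible (liftSet e D) e') :
    (∃ f : X ≃ₜ Y, f '' A = C ∧ f '' B = D) ↔
      Nonempty (↥(Itilde d') ≃ₜ ↥(Itilde e')) := by
  constructor
  · rintro ⟨f, hfA, hfB⟩
    obtain ⟨F, hFbase, hFpt⟩ := Itilde.exists_homeomorph_extend hd he f hfA
    have hFB : F '' liftSet d B = liftSet e D := by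
      rw [Itilde.liftSet_eq, Itilde.liftSet_eq, image_union, hFpt, image_image, ← hfB,
        image_image]
      simp only [hFbase]
    obtain ⟨G, -⟩ := Itilde.exists_homeomorph_extend hd' he' F hFB
    exact ⟨G⟩
  · rintro ⟨G⟩
    have hisoX : ∀ x : X, IsOpen {x} → x ∈ A := fun x hx => (hXperf x hx).elim
    have hisoY : ∀ y : Y, IsOpen {y} → y ∈ C := fun y hy => (hYperf y hy).elim
    obtain ⟨g₁, hg₁, -⟩ := Itilde.exists_homeomorph_restrict
      hd' (Itilde.isClosed_liftSet hd hA hAB hB)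
        (fun _ => Itilde.mem_liftSet_of_isOpen_singleton hd hisoX B)
      he' (Itilde.isClosed_liftSet he hC hCD hD)
        (fun _ => Itilde.mem_liftSet_of_isOpen_singleton he hisoY D) G
    obtain ⟨g, hgA, hg⟩ := Itilde.exists_homeomorph_restrict hd hA hisoX he hC hisoY g₁
    have hpre : g ⁻¹' D = B := ext fun x => by
      rw [mem_preimage, ← Itilde.base_mem_liftSet_iff (c := e), ← hg, ← hg₁,
        g₁.injective.mem_set_image, Itilde.base_mem_liftSet_iff]
    exact ⟨g, hgA, by rw [← hpre, g.image_preimage]⟩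

/-- for perfect compact metric spaces `X, Y` and closed subsets
`A ⊆ B ⊆ X`, `C ⊆ D ⊆ Y` with `A, C` nonempty, there is a homeomorphism `f : X → Y` with
`f(A) = C` and `f(B) = D` iff the twice-iterated spaces `I₂(X,B,A) = I_{d'}(I_d(X,A), B')`
and `I₂(Y,D,C) = I_{e'}(I_e(Y,C), D')` are homeomorphic. -/
theorem homeomorph_pair_iff_I2_homeomorph
    {X Y : Type*} [MetricSpace X] [CompactSpace X] [MetricSpace Y] [CompactSpace Y]
    (hXperf : ∀ x : X, ¬ IsOpen ({x} : Set X))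
    (hYperf : ∀ y : Y, ¬ IsOpen ({y} : Set Y))
    {A B : Set X} {C D : Set Y}
    (hA : IsClosed A) (hB : IsClosed B) (hAB : A ⊆ B) (hAne : A.Nonempty)
    (hC : IsClosed C) (hD : IsClosed D) (hCD : C ⊆ D) (hCne : C.Nonempty)
    {d : ℕ → X} {e : ℕ → Y} (hd : Admissible A d) (he : Admissible C e)
    {d' : ℕ → ↥(Itilde d)} {e' : ℕ → ↥(Itilde e)}
    (hd' : Admissible (liftSet d B) d') (he' : Admissible (liftSet e D) e') :
    (∃ f : X ≃ₜ Y, f '' A = C ∧ f '' B = D) ↔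
      Nonempty (↥(Itilde d') ≃ₜ ↥(Itilde e')) :=
  homeomorph_pair_iff_I2_homeomorph_general hXperf hYperf hA hB hAB hC hD hCD hd he hd' he'
end
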